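/- (Representability Theorem.) Let ⟨𝓔, ⊗, R, α, ℓ⁻¹, r⟩ be a monoidal category and ⋆ a right-monoidal structure on 𝓔 with the same unit object R, with canonical monad T = ⟨R⋆−, μ, η⟩. Then the following are equivalent: (i) the ⋆-structure is ⊗-representable, i.e., there exist a ⊗-bimonad ⟨O, ω, ι, O², O⁰⟩ and a twist isomorphism from the ⋆-structure to the right-monoidal structure M⊙N := M⊗ON it induces; (ii) there exists a natural isomorphism w_{M,N} : M⊗TN → M⋆N satisfying the heptagon (w_{L,M}⋆N)∘w_{L⊗TM,N}∘α_{L,TM,TN}∘(L⊗w⁻¹_{TM,N})∘(L⊗γ_{R,M,N}) = γ_{L,M,N}∘w_{L,M⋆N} and the tetragon ε_M∘w_{M,R} = r_M∘(M⊗ε_R); (iii) there exists a tetrahedral isomorphism t_{L,M,N} : L⊗(M⋆N) → (L⊗M)⋆N. -/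
import Mathlib


open CategoryTheory

universe v u

/-- A right-monoidal (skew-monoidal) category structure on a category `C`
with unit object `R`: a product `⋆`, a skew-associator `γ`, a unit `η` and
a counit `ε`, none of which is assumed invertible, subject to the pentagon
and the four (co)unit axioms. -/
structure RightMonoidalStruct (C : Type u) [Category.{v} C] (R : C) where
  smp : C → C → C
  smpHom : ∀ {X X' Y Y' : C}, (X ⟶ X') → (Y ⟶ Y') → (smp X Y ⟶ smp X' Y')
  smpHom_id : ∀ (X Y : C), smpHom (𝟙 X) (𝟙 Y) = 𝟙 (smp X Y)
  smpHom_comp : ∀ {X X' X'' Y Y' Y'' : C} (f : X ⟶ X') (f' : X' ⟶ X'')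
      (g : Y ⟶ Y') (g' : Y' ⟶ Y''),
      smpHom (f ≫ f') (g ≫ g') = smpHom f g ≫ smpHom f' g'
  γ : ∀ (L M N : C), smp L (smp M N) ⟶ smp (smp L M) N
  η : ∀ (M : C), M ⟶ smp R M
  ε : ∀ (M : C), smp M R ⟶ M
  γ_natural : ∀ {L L' M M' N N' : C} (f : L ⟶ L') (g : M ⟶ M') (h : N ⟶ N'),
      smpHom f (smpHom g h) ≫ γ L' M' N' = γ L M N ≫ smpHom (smpHom f g) h
  η_natural : ∀ {M M' : C} (f : M ⟶ M'), f ≫ η M' = η M ≫ smpHom (𝟙 R) f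
  ε_natural : ∀ {M M' : C} (f : M ⟶ M'), smpHom f (𝟙 R) ≫ ε M' = ε M ≫ f
  pentagon : ∀ (K L M N : C),
      smpHom (𝟙 K) (γ L M N) ≫ γ K (smp L M) N ≫ smpHom (γ K L M) (𝟙 N)
        = γ K L (smp M N) ≫ γ (smp K L) M N
  unit_triangle : ∀ (M N : C), η (smp M N) ≫ γ R M N = smpHom (η M) (𝟙 N)
  counit_triangle : ∀ (M N : C), γ M N R ≫ ε (smp M N) = smpHom (𝟙 M) (ε N)
  mixed_triangle : ∀ (M N : C),
      smpHom (𝟙 M) (η N) ≫ γ M R N ≫ smpHom (ε M) (𝟙 N) = 𝟙 (smp M N)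
  unit_counit : η R ≫ ε R = 𝟙 R


variable {C : Type u} [Category.{v} C] {R : C}

/-- The multiplication `μ_M := (ε_R ⋆ M) ∘ γ_{R,R,M}` of the canonical monad `T = R ⋆ -`. -/
def RightMonoidalStruct.μ (S : RightMonoidalStruct C R) (M : C) :
    S.smp R (S.smp R M) ⟶ S.smp R M :=
  S.γ R R M ≫ S.smpHom (S.ε R) (𝟙 M)

/-- The comultiplication `δ_M := γ_{M,R,R} ∘ (M ⋆ η_R)` of the canonical comonad `Q = - ⋆ R`. -/
def RightMonoidalStruct.δ (S : RightMonoidalStruct C R) (M : C) :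
    S.smp M R ⟶ S.smp (S.smp M R) R :=
  S.smpHom (𝟙 M) (S.η R) ≫ S.γ M R R


/-- A monad `⟨O, ω, ι⟩` on `C`, given by explicit data. -/
structure MonadStr (C : Type u) [Category.{v} C] where
  obj : C → C
  map : ∀ {X Y : C}, (X ⟶ Y) → (obj X ⟶ obj Y)
  map_id : ∀ X : C, map (𝟙 X) = 𝟙 (obj X)
  map_comp : ∀ {X Y Z : C} (f : X ⟶ Y) (g : Y ⟶ Z), map (f ≫ g) = map f ≫ map g
  ω : ∀ X : C, obj (obj X) ⟶ obj X
  ι : ∀ X : C, X ⟶ obj X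
  ω_natural : ∀ {X Y : C} (f : X ⟶ Y), map (map f) ≫ ω Y = ω X ≫ map f
  ι_natural : ∀ {X Y : C} (f : X ⟶ Y), f ≫ ι Y = ι X ≫ map f
  ω_assoc : ∀ X : C, map (ω X) ≫ ω X = ω (obj X) ≫ ω X
  ω_unit_left : ∀ X : C, ι (obj X) ≫ ω X = 𝟙 (obj X)
  ω_unit_right : ∀ X : C, map (ι X) ≫ ω X = 𝟙 (obj X)

/-- The seven opmonoidality axioms (opmon1)–(opmon7), together with naturality,
making a monad `O` on the right-monoidal category `⟨𝓔, ⊗, R, α, ℓ⁻¹, r⟩` an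
opmonoidal monad (`⊗`-bimonad). -/
def IsOpmonoidal (S : RightMonoidalStruct C R) (O : MonadStr C)
    (O2 : ∀ M N : C, O.obj (S.smp M N) ⟶ S.smp (O.obj M) (O.obj N))
    (O0 : O.obj R ⟶ R) : Prop :=
  (∀ {M M' N N' : C} (f : M ⟶ M') (g : N ⟶ N'),
      O.map (S.smpHom f g) ≫ O2 M' N' = O2 M N ≫ S.smpHom (O.map f) (O.map g)) ∧
  (∀ L M N : C,
      O2 L (S.smp M N) ≫ S.smpHom (𝟙 (O.obj L)) (O2 M N)
          ≫ S.γ (O.obj L) (O.obj M) (O.obj N)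
        = O.map (S.γ L M N) ≫ O2 (S.smp L M) N ≫ S.smpHom (O2 L M) (𝟙 (O.obj N))) ∧
  (∀ N : C,
      O.map (S.η N) ≫ O2 R N ≫ S.smpHom O0 (𝟙 (O.obj N)) = S.η (O.obj N)) ∧
  (∀ M : C,
      O2 M R ≫ S.smpHom (𝟙 (O.obj M)) O0 ≫ S.ε (O.obj M) = O.map (S.ε M)) ∧
  (∀ M N : C,
      O.map (O2 M N) ≫ O2 (O.obj M) (O.obj N) ≫ S.smpHom (O.ω M) (O.ω N)
        = O.ω (S.smp M N) ≫ O2 M N) ∧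
  (O.ω R ≫ O0 = O.map O0 ≫ O0) ∧
  (∀ M N : C, O.ι (S.smp M N) ≫ O2 M N = S.smpHom (O.ι M) (O.ι N)) ∧
  (O.ι R ≫ O0 = 𝟙 R)

/-- The fusion-operator axioms (H0)–(H6), together with naturality, for a
natural transformation `h_{M,N} : O(M ⊗ ON) → OM ⊗ ON` and `O⁰ : OR → R`. -/
def IsFusion (S : RightMonoidalStruct C R) (O : MonadStr C)
    (h : ∀ M N : C, O.obj (S.smp M (O.obj N)) ⟶ S.smp (O.obj M) (O.obj N))
    (O0 : O.obj R ⟶ R) : Prop :=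
  (∀ {M M' N N' : C} (f : M ⟶ M') (g : N ⟶ N'),
      O.map (S.smpHom f (O.map g)) ≫ h M' N'
        = h M N ≫ S.smpHom (O.map f) (O.map g)) ∧
  (∀ M N : C,
      h M (O.obj N) ≫ S.smpHom (𝟙 (O.obj M)) (O.ω N)
        = O.map (S.smpHom (𝟙 M) (O.ω N)) ≫ h M N) ∧
  (∀ L M N : C,
      O.map (S.smpHom (𝟙 L) (h M N)) ≫ O.map (S.γ L (O.obj M) (O.obj N))
          ≫ h (S.smp L (O.obj M)) N ≫ S.smpHom (h L M) (𝟙 (O.obj N))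
        = h L (S.smp M (O.obj N)) ≫ S.smpHom (𝟙 (O.obj L)) (h M N)
            ≫ S.γ (O.obj L) (O.obj M) (O.obj N)) ∧
  (∀ M N : C,
      O.ι (S.smp M (O.obj N)) ≫ h M N = S.smpHom (O.ι M) (𝟙 (O.obj N))) ∧
  (∀ N : C,
      O.map (S.η (O.obj N)) ≫ h R N ≫ S.smpHom O0 (𝟙 (O.obj N))
        = O.ω N ≫ S.η (O.obj N)) ∧
  (∀ M : C,
      h M R ≫ S.smpHom (𝟙 (O.obj M)) O0 ≫ S.ε (O.obj M)
        = O.map (S.smpHom (𝟙 M) O0) ≫ O.map (S.ε M)) ∧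
  (∀ M N : C,
      O.map (h M N) ≫ h (O.obj M) N ≫ S.smpHom (O.ω M) (𝟙 (O.obj N))
        = O.ω (S.smp M (O.obj N)) ≫ h M N) ∧
  (O.ι R ≫ O0 = 𝟙 R)

section
variable (S Sx : RightMonoidalStruct C R)

/-- A tetrahedral homomorphism from the `⋆`-structure `S` to the
`⊗`-structure `Sx` (with common unit `R`): a natural transformation
`t_{L,M,N} : L ⊗ (M ⋆ N) → (L ⊗ M) ⋆ N` satisfying the two pentagons and the
unit and counit triangles. -/
def TetraHom (t : ∀ L M N : C, Sx.smp L (S.smp M N) ⟶ S.smp (Sx.smp L M) N) :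
    Prop :=
  (∀ {L L' M M' N N' : C} (f : L ⟶ L') (g : M ⟶ M') (h : N ⟶ N'),
      Sx.smpHom f (S.smpHom g h) ≫ t L' M' N'
        = t L M N ≫ S.smpHom (Sx.smpHom f g) h) ∧
  (∀ K L M N : C,
      Sx.smpHom (𝟙 K) (t L M N) ≫ t K (Sx.smp L M) N
          ≫ S.smpHom (Sx.γ K L M) (𝟙 N)
        = Sx.γ K L (S.smp M N) ≫ t (Sx.smp K L) M N) ∧
  (∀ K L M N : C,
      Sx.smpHom (𝟙 K) (S.γ L M N) ≫ t K (S.smp L M) N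
          ≫ S.smpHom (t K L M) (𝟙 N)
        = t K L (S.smp M N) ≫ S.γ (Sx.smp K L) M N) ∧
  (∀ M N : C, Sx.η (S.smp M N) ≫ t R M N = S.smpHom (Sx.η M) (𝟙 N)) ∧
  (∀ M N : C, t M N R ≫ S.ε (Sx.smp M N) = Sx.smpHom (𝟙 M) (S.ε N))

/-- The comparison `w_{M,N} := (r_M ⋆ N) ∘ t_{M,R,N} : M ⊗ TN → M ⋆ N`
associated to a tetrahedral homomorphism, where `T = R ⋆ -`. -/
def twOf (t : ∀ L M N : C, Sx.smp L (S.smp M N) ⟶ S.smp (Sx.smp L M) N)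
    (M N : C) : Sx.smp M (S.smp R N) ⟶ S.smp M N :=
  t M R N ≫ S.smpHom (Sx.ε M) (𝟙 N)

end

/-- A "representing" natural isomorphism `w_{M,N} : M ⊗ TN ≅ M ⋆ N` (where
`T = R ⋆ -` is the canonical monad of the `⋆`-structure `S` and `⊗` is the
structure `Sx`), satisfying the heptagon and tetragon equations. -/
structure GoodW (S Sx : RightMonoidalStruct C R)
    (w : ∀ M N : C, Sx.smp M (S.smp R N) ⟶ S.smp M N) : Prop where
  natural : ∀ {M M' N N' : C} (f : M ⟶ M') (g : N ⟶ N'),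
      Sx.smpHom f (S.smpHom (𝟙 R) g) ≫ w M' N' = w M N ≫ S.smpHom f g
  iso : ∀ M N : C, IsIso (w M N)
  heptagon : ∀ L M N : C,
      Sx.smpHom (𝟙 L) (S.γ R M N)
          ≫ Sx.smpHom (𝟙 L) (@inv _ _ _ _ (w (S.smp R M) N) (iso (S.smp R M) N))
          ≫ Sx.γ L (S.smp R M) (S.smp R N)
          ≫ w (Sx.smp L (S.smp R M)) N
          ≫ S.smpHom (w L M) (𝟙 N)
        = w L (S.smp M N) ≫ S.γ L M N
  tetragon : ∀ M : C,
      w M R ≫ S.ε M = Sx.smpHom (𝟙 M) (S.ε R) ≫ Sx.ε M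

section
variable (S Sx : RightMonoidalStruct C R) (O : MonadStr C)
  (O2 : ∀ M N : C, O.obj (Sx.smp M N) ⟶ Sx.smp (O.obj M) (O.obj N))
  (O0 : O.obj R ⟶ R)

/-- The skew-associator of the right-monoidal structure `M ⊙ N := M ⊗ ON`
induced by a `⊗`-bimonad `O`. -/
def gdot (L M N : C) :
    Sx.smp L (O.obj (Sx.smp M (O.obj N)))
      ⟶ Sx.smp (Sx.smp L (O.obj M)) (O.obj N) :=
  Sx.smpHom (𝟙 L) (O2 M (O.obj N))
    ≫ Sx.smpHom (𝟙 L) (Sx.smpHom (𝟙 (O.obj M)) (O.ω N))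
    ≫ Sx.γ L (O.obj M) (O.obj N)

/-- The Prop stating that `v` is a twist isomorphism from the `⋆`-structure `S`
to the right-monoidal structure `M ⊙ N := M ⊗ ON` induced by the `⊗`-bimonad
`(O, O², O⁰)`. -/
structure TwistFromBimonad
    (v : ∀ M N : C, Sx.smp M (O.obj N) ⟶ S.smp M N) : Prop where
  natural : ∀ {M M' N N' : C} (f : M ⟶ M') (g : N ⟶ N'),
      Sx.smpHom f (O.map g) ≫ v M' N' = v M N ≫ S.smpHom f g
  iso : ∀ M N : C, IsIso (v M N)
  hexagon : ∀ L M N : C,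
      gdot Sx O O2 L M N ≫ Sx.smpHom (v L M) (𝟙 (O.obj N)) ≫ v (S.smp L M) N
        = Sx.smpHom (𝟙 L) (O.map (v M N)) ≫ v L (S.smp M N) ≫ S.γ L M N
  unit : ∀ N : C, (O.ι N ≫ Sx.η (O.obj N)) ≫ v R N = S.η N
  counit : ∀ M : C,
      v M R ≫ S.ε M = Sx.smpHom (𝟙 M) O0 ≫ Sx.ε M

end


namespace RightMonoidalStruct

variable {C : Type u} [Category.{v} C] {R : C}

section Generic
variable (A : RightMonoidalStruct C R)

lemma smpHom_comp' {X X' X'' Y Y' Y'' : C} (f : X ⟶ X') (f' : X' ⟶ X'')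
    (g : Y ⟶ Y') (g' : Y' ⟶ Y'') :
    A.smpHom f g ≫ A.smpHom f' g' = A.smpHom (f ≫ f') (g ≫ g') :=
  (A.smpHom_comp f f' g g').symm

lemma smpHom_hom_inv {X X' Y Y' : C} (f : X ⟶ X') (g : Y ⟶ Y') [IsIso f] [IsIso g] :
    A.smpHom f g ≫ A.smpHom (inv f) (inv g) = 𝟙 _ := by
  rw [A.smpHom_comp', IsIso.hom_inv_id, IsIso.hom_inv_id, A.smpHom_id]

lemma smpHom_inv_hom {X X' Y Y' : C} (f : X ⟶ X') (g : Y ⟶ Y') [IsIso f] [IsIso g] :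
    A.smpHom (inv f) (inv g) ≫ A.smpHom f g = 𝟙 _ := by
  rw [A.smpHom_comp', IsIso.inv_hom_id, IsIso.inv_hom_id, A.smpHom_id]

instance smpHom_isIso {X X' Y Y' : C} (f : X ⟶ X') (g : Y ⟶ Y') [IsIso f] [IsIso g] :
    IsIso (A.smpHom f g) :=
  ⟨A.smpHom (inv f) (inv g), A.smpHom_hom_inv f g, A.smpHom_inv_hom f g⟩

lemma inv_smpHom {X X' Y Y' : C} (f : X ⟶ X') (g : Y ⟶ Y') [IsIso f] [IsIso g] :
    inv (A.smpHom f g) = A.smpHom (inv f) (inv g) := by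
  exact (IsIso.eq_inv_of_hom_inv_id (A.smpHom_hom_inv f g)).symm

/-- interchange -/
lemma exch {X X' Y Y' : C} (f : X ⟶ X') (g : Y ⟶ Y') :
    A.smpHom f (𝟙 Y) ≫ A.smpHom (𝟙 X') g = A.smpHom (𝟙 X) g ≫ A.smpHom f (𝟙 Y') := by
  rw [A.smpHom_comp', A.smpHom_comp', Category.id_comp, Category.id_comp,
    Category.comp_id, Category.comp_id]

lemma smpHom_id_comp (X : C) {Y Y' Y'' : C} (f : Y ⟶ Y') (g : Y' ⟶ Y'') :
    A.smpHom (𝟙 X) (f ≫ g) = A.smpHom (𝟙 X) f ≫ A.smpHom (𝟙 X) g := by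
  rw [A.smpHom_comp']; simp

lemma smpHom_comp_id {X X' X'' : C} (f : X ⟶ X') (g : X' ⟶ X'') (Y : C) :
    A.smpHom (f ≫ g) (𝟙 Y) = A.smpHom f (𝟙 Y) ≫ A.smpHom g (𝟙 Y) := by
  rw [A.smpHom_comp']; simp

lemma smpHom_id_hom_inv (X : C) {Y Y' : C} (g : Y ⟶ Y') [IsIso g] :
    A.smpHom (𝟙 X) g ≫ A.smpHom (𝟙 X) (inv g) = 𝟙 _ := by
  rw [A.smpHom_comp', IsIso.hom_inv_id, Category.id_comp, A.smpHom_id]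

lemma smpHom_id_inv_hom (X : C) {Y Y' : C} (g : Y ⟶ Y') [IsIso g] :
    A.smpHom (𝟙 X) (inv g) ≫ A.smpHom (𝟙 X) g = 𝟙 _ := by
  rw [A.smpHom_comp', IsIso.inv_hom_id, Category.id_comp, A.smpHom_id]

lemma smpHom_inv_id {X X' Y : C} (f : X ⟶ X') [IsIso f] :
    A.smpHom (inv f) (𝟙 Y) = inv (A.smpHom f (𝟙 Y)) := by
  rw [A.inv_smpHom, IsIso.inv_id]

lemma smpHom_id_inv {X Y Y' : C} (g : Y ⟶ Y') [IsIso g] :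
    A.smpHom (𝟙 X) (inv g) = inv (A.smpHom (𝟙 X) g) := by
  rw [A.inv_smpHom, IsIso.inv_id]

end Generic

end RightMonoidalStruct

namespace RightMonoidalStruct

section Monad
variable {C : Type u} [Category.{v} C] {R : C} (S : RightMonoidalStruct C R)

lemma μ_natural {M M' : C} (f : M ⟶ M') :
    S.smpHom (𝟙 R) (S.smpHom (𝟙 R) f) ≫ S.μ M' = S.μ M ≫ S.smpHom (𝟙 R) f := by
  unfold μ
  rw [← Category.assoc, S.γ_natural]
  simp only [Category.assoc]
  congr 1
  rw [S.smpHom_comp', S.smpHom_comp', S.smpHom_id]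
  simp

lemma μ_assoc (M : C) :
    S.smpHom (𝟙 R) (S.μ M) ≫ S.μ M = S.μ (S.smp R M) ≫ S.μ M := by
  unfold μ
  have e1 : S.smpHom (𝟙 R) (S.γ R R M ≫ S.smpHom (S.ε R) (𝟙 M))
      = S.smpHom (𝟙 R) (S.γ R R M) ≫ S.smpHom (𝟙 R) (S.smpHom (S.ε R) (𝟙 M)) := by
    rw [S.smpHom_comp']; simp
  rw [e1]
  -- move the inner ε across γ via naturality
  have e2 : S.smpHom (𝟙 R) (S.smpHom (S.ε R) (𝟙 M)) ≫ S.γ R R M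
      = S.γ R (S.smp R R) M ≫ S.smpHom (S.smpHom (𝟙 R) (S.ε R)) (𝟙 M) :=
    S.γ_natural (𝟙 R) (S.ε R) (𝟙 M)
  slice_lhs 2 3 => rw [e2]
  -- rewrite (R ⋆ ε) via counit triangle
  have e3 : S.smpHom (𝟙 R) (S.ε R) = S.γ R R R ≫ S.ε (S.smp R R) :=
    (S.counit_triangle R R).symm
  rw [e3]
  have e4 : S.smpHom (S.γ R R R ≫ S.ε (S.smp R R)) (𝟙 M)
      = S.smpHom (S.γ R R R) (𝟙 M) ≫ S.smpHom (S.ε (S.smp R R)) (𝟙 M) := by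
    rw [S.smpHom_comp']; simp
  rw [e4]
  slice_lhs 1 3 => rw [S.pentagon R R R M]
  -- now handle the right-hand side
  have e5 : S.smpHom (S.ε R) (𝟙 (S.smp R M)) ≫ S.γ R R M
      = S.γ (S.smp R R) R M ≫ S.smpHom (S.smpHom (S.ε R) (𝟙 R)) (𝟙 M) := by
    have := S.γ_natural (S.ε R) (𝟙 R) (𝟙 M)
    rwa [S.smpHom_id] at this
  slice_rhs 2 3 => rw [e5]
  have e6 : S.smpHom (S.smpHom (S.ε R) (𝟙 R)) (𝟙 M) ≫ S.smpHom (S.ε R) (𝟙 M)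
      = S.smpHom (S.ε (S.smp R R)) (𝟙 M) ≫ S.smpHom (S.ε R) (𝟙 M) := by
    rw [S.smpHom_comp', S.smpHom_comp', S.ε_natural]
  simp only [Category.assoc]
  rw [e6]

lemma μ_unit_left (M : C) : S.η (S.smp R M) ≫ S.μ M = 𝟙 (S.smp R M) := by
  unfold μ
  rw [← Category.assoc, S.unit_triangle, S.smpHom_comp', Category.comp_id,
    S.unit_counit, S.smpHom_id]

lemma μ_unit_right (M : C) : S.smpHom (𝟙 R) (S.η M) ≫ S.μ M = 𝟙 (S.smp R M) :=
  S.mixed_triangle R M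

/-- The canonical monad `T = R ⋆ -` of a right-monoidal structure, as a `MonadStr`. -/
def TS : MonadStr C where
  obj X := S.smp R X
  map f := S.smpHom (𝟙 R) f
  map_id X := S.smpHom_id R X
  map_comp f g := by rw [S.smpHom_comp']; simp
  ω := S.μ
  ι := S.η
  ω_natural f := S.μ_natural f
  ι_natural f := S.η_natural f
  ω_assoc M := S.μ_assoc M
  ω_unit_left M := S.μ_unit_left M
  ω_unit_right M := S.μ_unit_right M

end Monad

end RightMonoidalStruct

namespace GoodW

variable {C : Type u} [Category.{v} C] {R : C}
variable {S Sx : RightMonoidalStruct C R}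
variable {w : ∀ M N : C, Sx.smp M (S.smp R N) ⟶ S.smp M N}

lemma nat1 (hw : GoodW S Sx w) {M M' : C} (N : C) (f : M ⟶ M') :
    Sx.smpHom f (𝟙 (S.smp R N)) ≫ w M' N = w M N ≫ S.smpHom f (𝟙 N) := by
  have := hw.natural f (𝟙 N)
  rwa [S.smpHom_id] at this

lemma nat2 (hw : GoodW S Sx w) (M : C) {N N' : C} (g : N ⟶ N') :
    Sx.smpHom (𝟙 M) (S.smpHom (𝟙 R) g) ≫ w M N' = w M N ≫ S.smpHom (𝟙 M) g :=
  hw.natural (𝟙 M) g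

lemma inv_nat (hw : GoodW S Sx w) {M M' N N' : C} (f : M ⟶ M') (g : N ⟶ N') :
    haveI := hw.iso
    S.smpHom f g ≫ inv (w M' N') = inv (w M N) ≫ Sx.smpHom f (S.smpHom (𝟙 R) g) := by
  haveI := hw.iso
  rw [IsIso.comp_inv_eq, Category.assoc, IsIso.eq_inv_comp]
  exact (hw.natural f g).symm

lemma inv_nat1 (hw : GoodW S Sx w) {M M' : C} (N : C) (f : M ⟶ M') :
    haveI := hw.iso
    S.smpHom f (𝟙 N) ≫ inv (w M' N) = inv (w M N) ≫ Sx.smpHom f (𝟙 (S.smp R N)) := by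
  have := hw.inv_nat f (𝟙 N)
  rwa [S.smpHom_id] at this

lemma inv_nat2 (hw : GoodW S Sx w) (M : C) {N N' : C} (g : N ⟶ N') :
    haveI := hw.iso
    S.smpHom (𝟙 M) g ≫ inv (w M N') = inv (w M N) ≫ Sx.smpHom (𝟙 M) (S.smpHom (𝟙 R) g) :=
  hw.inv_nat (𝟙 M) g

/-- The heptagon, restated. -/
lemma hepta (hw : GoodW S Sx w) (L M N : C) :
    haveI := hw.iso
    Sx.smpHom (𝟙 L) (S.γ R M N)
        ≫ Sx.smpHom (𝟙 L) (inv (w (S.smp R M) N))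
        ≫ Sx.γ L (S.smp R M) (S.smp R N)
        ≫ w (Sx.smp L (S.smp R M)) N
        ≫ S.smpHom (w L M) (𝟙 N)
      = w L (S.smp M N) ≫ S.γ L M N := hw.heptagon L M N

end GoodW

namespace GoodW

variable {C : Type u} [Category.{v} C] {R : C}
variable {S Sx : RightMonoidalStruct C R}
variable {w : ∀ M N : C, Sx.smp M (S.smp R N) ⟶ S.smp M N}

/-- The heptagon, rotated to an identity between inverse-composites. -/
lemma hepta' (hw : GoodW S Sx w) [∀ L M N : C, IsIso (Sx.γ L M N)] (L M N : C) :
    haveI := hw.iso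
    S.γ L M N ≫ inv (w (S.smp L M) N)
      ≫ Sx.smpHom (inv (w L M)) (𝟙 (S.smp R N))
      ≫ inv (Sx.γ L (S.smp R M) (S.smp R N))
    = inv (w L (S.smp M N)) ≫ Sx.smpHom (𝟙 L) (S.γ R M N)
      ≫ Sx.smpHom (𝟙 L) (inv (w (S.smp R M) N)) := by
  haveI := hw.iso
  rw [IsIso.eq_inv_comp, ← reassoc_of% (hw.hepta L M N)]
  rw [reassoc_of% (hw.inv_nat1 N (w L M)), IsIso.hom_inv_id_assoc]
  have h2 : Sx.smpHom (w L M) (𝟙 (S.smp R N)) ≫ Sx.smpHom (inv (w L M)) (𝟙 (S.smp R N))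
      = 𝟙 _ := by
    rw [Sx.smpHom_comp', IsIso.hom_inv_id, Category.comp_id, Sx.smpHom_id]
  rw [reassoc_of% h2]
  simp

end GoodW

namespace GoodW

section BC
variable {C : Type u} [Category.{v} C] {R : C}
variable {S Sx : RightMonoidalStruct C R}
variable {w : ∀ M N : C, Sx.smp M (S.smp R N) ⟶ S.smp M N}
variable [∀ L M N : C, IsIso (Sx.γ L M N)] [∀ M : C, IsIso (Sx.ε M)]
set_option linter.unusedSectionVars false

/-- The tetrahedral isomorphism associated to a good `w`. -/
noncomputable def tOf (hw : GoodW S Sx w) (L M N : C) :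
    Sx.smp L (S.smp M N) ⟶ S.smp (Sx.smp L M) N :=
  haveI := hw.iso
  Sx.smpHom (𝟙 L) (inv (w M N)) ≫ Sx.γ L M (S.smp R N) ≫ w (Sx.smp L M) N

lemma tOf_natural (hw : GoodW S Sx w) {L L' M M' N N' : C}
    (f : L ⟶ L') (g : M ⟶ M') (h : N ⟶ N') :
    Sx.smpHom f (S.smpHom g h) ≫ tOf hw L' M' N'
      = tOf hw L M N ≫ S.smpHom (Sx.smpHom f g) h := by
  haveI := hw.iso
  unfold tOf
  have e1 : Sx.smpHom f (S.smpHom g h) ≫ Sx.smpHom (𝟙 L') (inv (w M' N'))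
      = Sx.smpHom (𝟙 L) (inv (w M N)) ≫ Sx.smpHom f (Sx.smpHom g (S.smpHom (𝟙 R) h)) := by
    rw [Sx.smpHom_comp', Sx.smpHom_comp', Category.comp_id, Category.id_comp,
      hw.inv_nat g h]
  rw [reassoc_of% e1, reassoc_of% (Sx.γ_natural f g (S.smpHom (𝟙 R) h))]
  rw [Category.assoc, hw.natural (Sx.smpHom f g) h]
  simp only [Category.assoc]

lemma tOf_pentagon1 (hw : GoodW S Sx w) (K L M N : C) :
    Sx.smpHom (𝟙 K) (tOf hw L M N) ≫ tOf hw K (Sx.smp L M) N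
        ≫ S.smpHom (Sx.γ K L M) (𝟙 N)
      = Sx.γ K L (S.smp M N) ≫ tOf hw (Sx.smp K L) M N := by
  haveI := hw.iso
  unfold tOf
  rw [Sx.smpHom_id_comp, Sx.smpHom_id_comp]
  simp only [Category.assoc]
  rw [reassoc_of% (Sx.smpHom_id_hom_inv K (w (Sx.smp L M) N))]
  rw [← hw.nat1 N (Sx.γ K L M)]
  rw [reassoc_of% (Sx.pentagon K L M (S.smp R N))]
  have e2 : Sx.smpHom (𝟙 K) (Sx.smpHom (𝟙 L) (inv (w M N)))
        ≫ Sx.γ K L (Sx.smp M (S.smp R N))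
      = Sx.γ K L (S.smp M N) ≫ Sx.smpHom (𝟙 (Sx.smp K L)) (inv (w M N)) := by
    have := Sx.γ_natural (𝟙 K) (𝟙 L) (inv (w M N))
    rwa [Sx.smpHom_id] at this
  rw [reassoc_of% e2]

lemma tOf_pentagon2 (hw : GoodW S Sx w) (K L M N : C) :
    Sx.smpHom (𝟙 K) (S.γ L M N) ≫ tOf hw K (S.smp L M) N
        ≫ S.smpHom (tOf hw K L M) (𝟙 N)
      = tOf hw K L (S.smp M N) ≫ S.γ (Sx.smp K L) M N := by
  haveI := hw.iso
  unfold tOf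
  simp only [Category.assoc]
  -- LHS reduction
  rw [← hw.nat1 N (Sx.smpHom (𝟙 K) (inv (w L M)) ≫ Sx.γ K L (S.smp R M) ≫ w (Sx.smp K L) M)]
  rw [Sx.smpHom_comp_id, Sx.smpHom_comp_id]
  simp only [Category.assoc]
  have e1 : Sx.γ K (S.smp L M) (S.smp R N)
        ≫ Sx.smpHom (Sx.smpHom (𝟙 K) (inv (w L M))) (𝟙 (S.smp R N))
      = Sx.smpHom (𝟙 K) (Sx.smpHom (inv (w L M)) (𝟙 (S.smp R N)))
        ≫ Sx.γ K (Sx.smp L (S.smp R M)) (S.smp R N) :=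
    (Sx.γ_natural (𝟙 K) (inv (w L M)) (𝟙 (S.smp R N))).symm
  rw [reassoc_of% e1]
  have e2 : Sx.γ K (Sx.smp L (S.smp R M)) (S.smp R N)
        ≫ Sx.smpHom (Sx.γ K L (S.smp R M)) (𝟙 (S.smp R N))
      = Sx.smpHom (𝟙 K) (inv (Sx.γ L (S.smp R M) (S.smp R N)))
        ≫ Sx.γ K L (Sx.smp (S.smp R M) (S.smp R N))
        ≫ Sx.γ (Sx.smp K L) (S.smp R M) (S.smp R N) := by
    rw [← cancel_epi (Sx.smpHom (𝟙 K) (Sx.γ L (S.smp R M) (S.smp R N))),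
      reassoc_of% (Sx.smpHom_id_hom_inv K (Sx.γ L (S.smp R M) (S.smp R N)))]
    exact Sx.pentagon K L (S.smp R M) (S.smp R N)
  rw [reassoc_of% e2]
  rw [hw.nat1 N (w (Sx.smp K L) M)]
  have e4 : Sx.smpHom (𝟙 K) (S.γ L M N) ≫ Sx.smpHom (𝟙 K) (inv (w (S.smp L M) N))
        ≫ Sx.smpHom (𝟙 K) (Sx.smpHom (inv (w L M)) (𝟙 (S.smp R N)))
        ≫ Sx.smpHom (𝟙 K) (inv (Sx.γ L (S.smp R M) (S.smp R N)))
      = Sx.smpHom (𝟙 K) (inv (w L (S.smp M N)))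
        ≫ Sx.smpHom (𝟙 K) (Sx.smpHom (𝟙 L) (S.γ R M N))
        ≫ Sx.smpHom (𝟙 K) (Sx.smpHom (𝟙 L) (inv (w (S.smp R M) N))) := by
    simp only [← Sx.smpHom_id_comp]
    rw [hw.hepta' L M N]
    simp only [Sx.smpHom_id_comp, Category.assoc]
  rw [reassoc_of% e4]
  -- RHS reduction
  rw [← hw.hepta (Sx.smp K L) M N]
  have e3 : ∀ {X Y : C} (h : X ⟶ Y),
      Sx.γ K L X ≫ Sx.smpHom (𝟙 (Sx.smp K L)) h
        = Sx.smpHom (𝟙 K) (Sx.smpHom (𝟙 L) h) ≫ Sx.γ K L Y := by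
    intro X Y h
    have := Sx.γ_natural (𝟙 K) (𝟙 L) h
    rw [Sx.smpHom_id] at this
    exact this.symm
  rw [reassoc_of% (e3 (S.γ R M N)), reassoc_of% (e3 (inv (w (S.smp R M) N)))]

lemma tOf_unit (hw : GoodW S Sx w) (M N : C) :
    Sx.η (S.smp M N) ≫ tOf hw R M N = S.smpHom (Sx.η M) (𝟙 N) := by
  haveI := hw.iso
  unfold tOf
  have e1 : Sx.η (S.smp M N) ≫ Sx.smpHom (𝟙 R) (inv (w M N))
      = inv (w M N) ≫ Sx.η (Sx.smp M (S.smp R N)) := (Sx.η_natural (inv (w M N))).symm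
  rw [reassoc_of% e1, reassoc_of% (Sx.unit_triangle M (S.smp R N)), hw.nat1,
    IsIso.inv_hom_id_assoc]

lemma tOf_counit (hw : GoodW S Sx w) (M N : C) :
    tOf hw M N R ≫ S.ε (Sx.smp M N) = Sx.smpHom (𝟙 M) (S.ε N) := by
  haveI := hw.iso
  unfold tOf
  simp only [Category.assoc]
  rw [hw.tetragon (Sx.smp M N)]
  have e1 : Sx.γ M N (S.smp R R) ≫ Sx.smpHom (𝟙 (Sx.smp M N)) (S.ε R)
      = Sx.smpHom (𝟙 M) (Sx.smpHom (𝟙 N) (S.ε R)) ≫ Sx.γ M N R := by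
    have := Sx.γ_natural (𝟙 M) (𝟙 N) (S.ε R)
    rw [Sx.smpHom_id] at this
    exact this.symm
  rw [reassoc_of% e1, Sx.counit_triangle M N]
  simp only [← Sx.smpHom_id_comp]
  congr 1
  rw [← hw.tetragon N, IsIso.inv_hom_id_assoc]

lemma twOf_tOf (hw : GoodW S Sx w) (M N : C) :
    twOf S Sx (tOf hw) M N
      = haveI := hw.iso
        Sx.smpHom (𝟙 M) (inv (w R N)) ≫ Sx.γ M R (S.smp R N)
          ≫ Sx.smpHom (Sx.ε M) (𝟙 (S.smp R N)) ≫ w M N := by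
  haveI := hw.iso
  unfold twOf tOf
  simp only [Category.assoc]
  rw [← hw.nat1 N (Sx.ε M)]

lemma twOf_tOf_isIso (hw : GoodW S Sx w) (M N : C) :
    IsIso (twOf S Sx (tOf hw) M N) := by
  haveI := hw.iso
  rw [hw.twOf_tOf M N]
  infer_instance

end BC

end GoodW

section CB
variable {C : Type u} [Category.{v} C] {R : C}
variable {S Sx : RightMonoidalStruct C R}
variable {t : ∀ L M N : C, Sx.smp L (S.smp M N) ⟶ S.smp (Sx.smp L M) N}
variable [∀ L M N : C, IsIso (Sx.γ L M N)] [∀ M : C, IsIso (Sx.ε M)]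
set_option linter.unusedSectionVars false

lemma twOf_natural (ht : TetraHom S Sx t) {M M' N N' : C} (f : M ⟶ M') (g : N ⟶ N') :
    Sx.smpHom f (S.smpHom (𝟙 R) g) ≫ twOf S Sx t M' N'
      = twOf S Sx t M N ≫ S.smpHom f g := by
  have e : S.smpHom (Sx.smpHom f (𝟙 R)) g ≫ S.smpHom (Sx.ε M') (𝟙 N')
      = S.smpHom (Sx.ε M) (𝟙 N) ≫ S.smpHom f g := by
    rw [S.smpHom_comp', S.smpHom_comp', Sx.ε_natural f]
    simp
  unfold twOf
  rw [Category.assoc, reassoc_of% (ht.1 f (𝟙 R) g), e]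

/-- Subclaim 1: `(L ⊗ v_{X,N}) ∘ t = γ̃ ∘ v`. -/
lemma twOf_sub1 (ht : TetraHom S Sx t) (L X N : C) :
    Sx.smpHom (𝟙 L) (twOf S Sx t X N) ≫ t L X N
      = Sx.γ L X (S.smp R N) ≫ twOf S Sx t (Sx.smp L X) N := by
  unfold twOf
  rw [Sx.smpHom_id_comp]
  have e1 : Sx.smpHom (𝟙 L) (S.smpHom (Sx.ε X) (𝟙 N)) ≫ t L X N
      = t L (Sx.smp X R) N ≫ S.smpHom (Sx.smpHom (𝟙 L) (Sx.ε X)) (𝟙 N) :=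
    ht.1 (𝟙 L) (Sx.ε X) (𝟙 N)
  rw [Category.assoc, e1, ← reassoc_of% (ht.2.1 L X R N)]
  rw [← Sx.counit_triangle L X, S.smpHom_comp_id]

/-- Subclaim 2. -/
lemma twOf_sub2 (ht : TetraHom S Sx t) (L M N : C) :
    Sx.smpHom (𝟙 L) (S.γ R M N) ≫ t L (S.smp R M) N
        ≫ S.smpHom (twOf S Sx t L M) (𝟙 N)
      = twOf S Sx t L (S.smp M N) ≫ S.γ L M N := by
  unfold twOf
  rw [S.smpHom_comp_id]
  simp only [Category.assoc]
  rw [reassoc_of% (ht.2.2.1 L R M N)]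
  have e2 : S.smpHom (Sx.ε L) (𝟙 (S.smp M N)) ≫ S.γ L M N
      = S.γ (Sx.smp L R) M N ≫ S.smpHom (S.smpHom (Sx.ε L) (𝟙 M)) (𝟙 N) := by
    have := S.γ_natural (Sx.ε L) (𝟙 M) (𝟙 N)
    rwa [S.smpHom_id] at this
  rw [← e2]

lemma goodW_twOf (ht : TetraHom S Sx t) (hiso : ∀ M N : C, IsIso (twOf S Sx t M N)) :
    GoodW S Sx (twOf S Sx t) where
  natural f g := twOf_natural ht f g
  iso := hiso
  heptagon L M N := by
    haveI := hiso
    rw [← reassoc_of% (twOf_sub1 ht L (S.smp R M) N)]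
    rw [reassoc_of% (Sx.smpHom_id_inv_hom L (twOf S Sx t (S.smp R M) N))]
    exact twOf_sub2 ht L M N
  tetragon M := by
    unfold twOf
    rw [Category.assoc, S.ε_natural (Sx.ε M), ← Category.assoc, ht.2.2.2.2 M R]

end CB

lemma MonadStr.map_isIso {C : Type u} [Category.{v} C] (O : MonadStr C)
    {X Y : C} (f : X ⟶ Y) [IsIso f] : IsIso (O.map f) :=
  ⟨O.map (inv f),
    by rw [← O.map_comp, IsIso.hom_inv_id, O.map_id],
    by rw [← O.map_comp, IsIso.inv_hom_id, O.map_id]⟩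

section AB
variable {C : Type u} [Category.{v} C] {R : C}
variable {S Sx : RightMonoidalStruct C R}
variable {O : MonadStr C}
variable {O2 : ∀ M N : C, O.obj (Sx.smp M N) ⟶ Sx.smp (O.obj M) (O.obj N)}
variable {O0 : O.obj R ⟶ R}
variable {v : ∀ M N : C, Sx.smp M (O.obj N) ⟶ S.smp M N}
variable [∀ L M N : C, IsIso (Sx.γ L M N)] [∀ M : C, IsIso (Sx.η M)]
  [∀ M : C, IsIso (Sx.ε M)]
set_option linter.unusedSectionVars false

/-- `u_N : TN → ON`, the comparison between the canonical monad and `O`. -/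
noncomputable def uT (htw : TwistFromBimonad S Sx O O2 O0 v) (N : C) :
    S.smp R N ⟶ O.obj N :=
  haveI := htw.iso
  inv (v R N) ≫ inv (Sx.η (O.obj N))

/-- The candidate good `w` built from a twist. -/
noncomputable def wvOf (htw : TwistFromBimonad S Sx O O2 O0 v) (M N : C) :
    Sx.smp M (S.smp R N) ⟶ S.smp M N :=
  Sx.smpHom (𝟙 M) (uT htw N) ≫ v M N

instance uT_isIso (htw : TwistFromBimonad S Sx O O2 O0 v) (N : C) :
    IsIso (uT htw N) := by
  haveI := htw.iso
  unfold uT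
  infer_instance

instance wvOf_isIso (htw : TwistFromBimonad S Sx O O2 O0 v) (M N : C) :
    IsIso (wvOf htw M N) := by
  haveI := htw.iso
  unfold wvOf
  infer_instance

lemma v_nat1 (htw : TwistFromBimonad S Sx O O2 O0 v) {M M' : C} (N : C) (f : M ⟶ M') :
    Sx.smpHom f (𝟙 (O.obj N)) ≫ v M' N = v M N ≫ S.smpHom f (𝟙 N) := by
  have := htw.natural f (𝟙 N)
  rwa [O.map_id] at this

lemma v_u (htw : TwistFromBimonad S Sx O O2 O0 v) (N : C) :
    v R N ≫ uT htw N = inv (Sx.η (O.obj N)) := by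
  haveI := htw.iso
  unfold uT
  rw [IsIso.hom_inv_id_assoc]

lemma u_nat (htw : TwistFromBimonad S Sx O O2 O0 v) {N N' : C} (g : N ⟶ N') :
    S.smpHom (𝟙 R) g ≫ uT htw N' = uT htw N ≫ O.map g := by
  haveI := htw.iso
  unfold uT
  have e1 : inv (Sx.η (O.obj N)) ≫ O.map g
      = Sx.smpHom (𝟙 R) (O.map g) ≫ inv (Sx.η (O.obj N')) := by
    rw [IsIso.inv_comp_eq, ← Category.assoc, ← Sx.η_natural (O.map g),
      Category.assoc, IsIso.hom_inv_id, Category.comp_id]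
  have e2 : inv (v R N) ≫ Sx.smpHom (𝟙 R) (O.map g)
      = S.smpHom (𝟙 R) g ≫ inv (v R N') := by
    rw [IsIso.inv_comp_eq, ← Category.assoc, IsIso.eq_comp_inv]
    exact htw.natural (𝟙 R) g
  rw [Category.assoc, e1, reassoc_of% e2]

lemma u_O0 (htw : TwistFromBimonad S Sx O O2 O0 v) :
    uT htw R ≫ O0 = S.ε R := by
  haveI := htw.iso
  unfold uT
  rw [Category.assoc, IsIso.inv_comp_eq, IsIso.inv_comp_eq]
  rw [htw.counit R, ← reassoc_of% (Sx.η_natural O0), Sx.unit_counit, Category.comp_id]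

/-- The key identity `(†)`. -/
lemma dagger (htw : TwistFromBimonad S Sx O O2 O0 v) (M N : C) :
    haveI := htw.iso
    haveI : ∀ X Y : C, IsIso (O.map (v X Y)) := fun X Y => O.map_isIso (v X Y)
    S.γ R M N ≫ inv (v (S.smp R M) N) ≫ Sx.smpHom (uT htw M) (𝟙 (O.obj N))
      = uT htw (S.smp M N) ≫ inv (O.map (v M N)) ≫ O2 M (O.obj N)
        ≫ Sx.smpHom (𝟙 (O.obj M)) (O.ω N) := by
  haveI := htw.iso
  haveI : ∀ X Y : C, IsIso (O.map (v X Y)) := fun X Y => O.map_isIso (v X Y)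
  rw [← cancel_epi (Sx.η (O.obj (S.smp M N)) ≫ v R (S.smp M N))]
  have hx' : v R (S.smp M N) ≫ S.γ R M N
      = Sx.smpHom (𝟙 R) (inv (O.map (v M N))) ≫ gdot Sx O O2 R M N
        ≫ Sx.smpHom (v R M) (𝟙 (O.obj N)) ≫ v (S.smp R M) N := by
    rw [Sx.smpHom_id_inv, IsIso.eq_inv_comp]
    exact (htw.hexagon R M N).symm
  have hu : v R (S.smp M N) ≫ uT htw (S.smp M N) = inv (Sx.η (O.obj (S.smp M N))) :=
    v_u htw (S.smp M N)
  simp only [Category.assoc]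
  rw [reassoc_of% hx', reassoc_of% hu, IsIso.hom_inv_id_assoc, IsIso.hom_inv_id_assoc]
  have e3 : Sx.smpHom (v R M) (𝟙 (O.obj N)) ≫ Sx.smpHom (uT htw M) (𝟙 (O.obj N))
      = Sx.smpHom (inv (Sx.η (O.obj M))) (𝟙 (O.obj N)) := by
    rw [Sx.smpHom_comp', v_u htw M, Category.comp_id]
  rw [e3]
  have n1 : ∀ {X Y : C} (h : X ⟶ Y),
      Sx.η X ≫ Sx.smpHom (𝟙 R) h = h ≫ Sx.η Y := fun h => (Sx.η_natural h).symm
  unfold gdot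
  simp only [Category.assoc]
  rw [reassoc_of% (n1 (inv (O.map (v M N)))), reassoc_of% (n1 (O2 M (O.obj N))),
    reassoc_of% (n1 (Sx.smpHom (𝟙 (O.obj M)) (O.ω N)))]
  rw [reassoc_of% (Sx.unit_triangle (O.obj M) (O.obj N))]
  have e4 : Sx.smpHom (Sx.η (O.obj M)) (𝟙 (O.obj N))
        ≫ Sx.smpHom (inv (Sx.η (O.obj M))) (𝟙 (O.obj N)) = 𝟙 _ := by
    rw [Sx.smpHom_comp', IsIso.hom_inv_id, Category.comp_id, Sx.smpHom_id]
  rw [e4, Category.comp_id]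

end AB

section AB2
variable {C : Type u} [Category.{v} C] {R : C}
variable {S Sx : RightMonoidalStruct C R}
variable {O : MonadStr C}
variable {O2 : ∀ M N : C, O.obj (Sx.smp M N) ⟶ Sx.smp (O.obj M) (O.obj N)}
variable {O0 : O.obj R ⟶ R}
variable {v : ∀ M N : C, Sx.smp M (O.obj N) ⟶ S.smp M N}
variable [∀ L M N : C, IsIso (Sx.γ L M N)] [∀ M : C, IsIso (Sx.η M)]
  [∀ M : C, IsIso (Sx.ε M)]
set_option linter.unusedSectionVars false

lemma hexagon_inv (htw : TwistFromBimonad S Sx O O2 O0 v) (L M N : C) :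
    haveI := htw.iso
    haveI : ∀ X Y : C, IsIso (O.map (v X Y)) := fun X Y => O.map_isIso (v X Y)
    v L (S.smp M N) ≫ S.γ L M N
      = Sx.smpHom (𝟙 L) (inv (O.map (v M N))) ≫ gdot Sx O O2 L M N
        ≫ Sx.smpHom (v L M) (𝟙 (O.obj N)) ≫ v (S.smp L M) N := by
  haveI := htw.iso
  haveI : ∀ X Y : C, IsIso (O.map (v X Y)) := fun X Y => O.map_isIso (v X Y)
  rw [Sx.smpHom_id_inv, IsIso.eq_inv_comp]
  exact (htw.hexagon L M N).symm

lemma goodW_wvOf (htw : TwistFromBimonad S Sx O O2 O0 v) :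
    GoodW S Sx (wvOf htw) where
  natural {M M' N N'} f g := by
    unfold wvOf
    have e1 : Sx.smpHom f (S.smpHom (𝟙 R) g) ≫ Sx.smpHom (𝟙 M') (uT htw N')
        = Sx.smpHom (𝟙 M) (uT htw N) ≫ Sx.smpHom f (O.map g) := by
      rw [Sx.smpHom_comp', Sx.smpHom_comp', Category.comp_id, Category.id_comp,
        u_nat htw g]
    rw [reassoc_of% e1, htw.natural f g]
    simp only [Category.assoc]
  iso M N := wvOf_isIso htw M N
  heptagon L M N := by
    haveI := htw.iso
    haveI : ∀ X Y : C, IsIso (O.map (v X Y)) := fun X Y => O.map_isIso (v X Y)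
    have einv : inv (wvOf htw (S.smp R M) N)
        = inv (v (S.smp R M) N)
          ≫ Sx.smpHom (𝟙 (S.smp R M)) (inv (uT htw N)) := by
      unfold wvOf
      rw [IsIso.inv_comp, Sx.smpHom_id_inv]
    rw [einv, Sx.smpHom_id_comp]
    simp only [Category.assoc]
    have eA : Sx.smpHom (𝟙 L) (Sx.smpHom (𝟙 (S.smp R M)) (inv (uT htw N)))
          ≫ Sx.γ L (S.smp R M) (S.smp R N)
        = Sx.γ L (S.smp R M) (O.obj N)
          ≫ Sx.smpHom (𝟙 (Sx.smp L (S.smp R M))) (inv (uT htw N)) := by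
      have := Sx.γ_natural (𝟙 L) (𝟙 (S.smp R M)) (inv (uT htw N))
      rwa [Sx.smpHom_id] at this
    rw [reassoc_of% eA]
    show _ ≫ _ ≫ _ ≫ _ ≫ (Sx.smpHom (𝟙 (Sx.smp L (S.smp R M))) (uT htw N)
        ≫ v (Sx.smp L (S.smp R M)) N) ≫ _ = _
    simp only [Category.assoc]
    rw [reassoc_of% (Sx.smpHom_id_inv_hom (Sx.smp L (S.smp R M)) (uT htw N))]
    show _ ≫ _ ≫ _ ≫ _ ≫ S.smpHom (Sx.smpHom (𝟙 L) (uT htw M) ≫ v L M) (𝟙 N) = _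
    rw [S.smpHom_comp_id]
    rw [← Category.assoc (v (Sx.smp L (S.smp R M)) N),
      ← v_nat1 htw N (Sx.smpHom (𝟙 L) (uT htw M))]
    simp only [Category.assoc]
    rw [← v_nat1 htw N (v L M)]
    have eB : Sx.γ L (S.smp R M) (O.obj N)
          ≫ Sx.smpHom (Sx.smpHom (𝟙 L) (uT htw M)) (𝟙 (O.obj N))
        = Sx.smpHom (𝟙 L) (Sx.smpHom (uT htw M) (𝟙 (O.obj N)))
          ≫ Sx.γ L (O.obj M) (O.obj N) :=
      (Sx.γ_natural (𝟙 L) (uT htw M) (𝟙 (O.obj N))).symm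
    rw [reassoc_of% eB]
    have e5 : Sx.smpHom (𝟙 L) (S.γ R M N) ≫ Sx.smpHom (𝟙 L) (inv (v (S.smp R M) N))
          ≫ Sx.smpHom (𝟙 L) (Sx.smpHom (uT htw M) (𝟙 (O.obj N)))
        = Sx.smpHom (𝟙 L) (uT htw (S.smp M N))
          ≫ Sx.smpHom (𝟙 L) (inv (O.map (v M N)))
          ≫ Sx.smpHom (𝟙 L) (O2 M (O.obj N))
          ≫ Sx.smpHom (𝟙 L) (Sx.smpHom (𝟙 (O.obj M)) (O.ω N)) := by
      simp only [← Sx.smpHom_id_comp]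
      rw [dagger htw M N]
    rw [reassoc_of% e5]
    -- right-hand side
    show _ = (Sx.smpHom (𝟙 L) (uT htw (S.smp M N)) ≫ v L (S.smp M N)) ≫ S.γ L M N
    rw [Category.assoc, hexagon_inv htw L M N]
    unfold gdot
    simp only [Category.assoc]
  tetragon M := by
    unfold wvOf
    rw [Category.assoc, htw.counit M]
    have e : Sx.smpHom (𝟙 M) (uT htw R) ≫ Sx.smpHom (𝟙 M) O0
        = Sx.smpHom (𝟙 M) (S.ε R) := by
      rw [Sx.smpHom_comp', Category.id_comp, u_O0 htw]
    rw [reassoc_of% e]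

end AB2

namespace GoodW
section Norm
variable {C : Type u} [Category.{v} C] {R : C}
variable {S Sx : RightMonoidalStruct C R}
variable {w : ∀ M N : C, Sx.smp M (S.smp R N) ⟶ S.smp M N}
variable [∀ L M N : C, IsIso (Sx.γ L M N)] [∀ M : C, IsIso (Sx.η M)]
  [∀ M : C, IsIso (Sx.ε M)]
set_option linter.unusedSectionVars false

/-- `e_N := ηx_{TN} ≫ w_{R,N} : TN → TN`. -/
noncomputable def eW (hw : GoodW S Sx w) (N : C) : S.smp R N ⟶ S.smp R N :=
  Sx.η (S.smp R N) ≫ w R N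

instance eW_isIso (hw : GoodW S Sx w) (N : C) : IsIso (eW hw N) := by
  haveI := hw.iso
  unfold eW
  infer_instance

lemma eW_nat (hw : GoodW S Sx w) {N N' : C} (g : N ⟶ N') :
    S.smpHom (𝟙 R) g ≫ eW hw N' = eW hw N ≫ S.smpHom (𝟙 R) g := by
  unfold eW
  rw [← Category.assoc, Sx.η_natural (S.smpHom (𝟙 R) g), Category.assoc,
    hw.natural (𝟙 R) g, Category.assoc]

lemma eW_E (hw : GoodW S Sx w) (M N : C) :
    S.γ R M N ≫ S.smpHom (eW hw M) (𝟙 N) = eW hw (S.smp M N) ≫ S.γ R M N := by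
  haveI := hw.iso
  have h2 : Sx.η (S.smp R (S.smp M N)) ≫ Sx.smpHom (𝟙 R) (S.γ R M N)
        ≫ Sx.smpHom (𝟙 R) (inv (w (S.smp R M) N))
        ≫ Sx.γ R (S.smp R M) (S.smp R N)
        ≫ w (Sx.smp R (S.smp R M)) N
        ≫ S.smpHom (w R M) (𝟙 N)
      = Sx.η (S.smp R (S.smp M N)) ≫ w R (S.smp M N) ≫ S.γ R M N := by
    rw [hw.hepta R M N]
  rw [← reassoc_of% (Sx.η_natural (S.γ R M N)),
    ← reassoc_of% (Sx.η_natural (inv (w (S.smp R M) N))),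
    reassoc_of% (Sx.unit_triangle (S.smp R M) (S.smp R N)),
    reassoc_of% (hw.nat1 N (Sx.η (S.smp R M))), IsIso.inv_hom_id_assoc] at h2
  have e1 : S.smpHom (Sx.η (S.smp R M)) (𝟙 N) ≫ S.smpHom (w R M) (𝟙 N)
      = S.smpHom (eW hw M) (𝟙 N) := by
    rw [S.smpHom_comp', Category.comp_id]; rfl
  rw [e1] at h2
  unfold eW
  simp only [Category.assoc]
  exact h2

lemma eW_E_inv (hw : GoodW S Sx w) (M N : C) :
    S.γ R M N ≫ S.smpHom (inv (eW hw M)) (𝟙 N)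
      = inv (eW hw (S.smp M N)) ≫ S.γ R M N := by
  rw [IsIso.eq_inv_comp, ← reassoc_of% (eW_E hw M N), S.smpHom_comp',
    IsIso.hom_inv_id, Category.comp_id, S.smpHom_id, Category.comp_id]

lemma eW_eps (hw : GoodW S Sx w) : eW hw R ≫ S.ε R = S.ε R := by
  unfold eW
  rw [Category.assoc, hw.tetragon R, ← reassoc_of% (Sx.η_natural (S.ε R)),
    Sx.unit_counit, Category.comp_id]

/-- The normalized good `w`. -/
noncomputable def wN (hw : GoodW S Sx w) (M N : C) :
    Sx.smp M (S.smp R N) ⟶ S.smp M N :=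
  Sx.smpHom (𝟙 M) (inv (eW hw N)) ≫ w M N

instance wN_isIso (hw : GoodW S Sx w) (M N : C) : IsIso (wN hw M N) := by
  haveI := hw.iso
  unfold wN
  infer_instance

lemma wN_norm (hw : GoodW S Sx w) (N : C) :
    Sx.η (S.smp R N) ≫ wN hw R N = 𝟙 (S.smp R N) := by
  unfold wN
  rw [← reassoc_of% (Sx.η_natural (inv (eW hw N)))]
  show inv (eW hw N) ≫ eW hw N = _
  rw [IsIso.inv_hom_id]

lemma wN_inv (hw : GoodW S Sx w) (M N : C) :
    haveI := hw.iso
    inv (wN hw M N) = inv (w M N) ≫ Sx.smpHom (𝟙 M) (eW hw N) := by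
  haveI := hw.iso
  have h : wN hw M N ≫ (inv (w M N) ≫ Sx.smpHom (𝟙 M) (eW hw N)) = 𝟙 _ := by
    unfold wN
    rw [Category.assoc, IsIso.hom_inv_id_assoc, Sx.smpHom_id_inv_hom]
  exact (IsIso.eq_inv_of_hom_inv_id h).symm

lemma goodW_wN (hw : GoodW S Sx w) : GoodW S Sx (wN hw) where
  natural {M M' N N'} f g := by
    unfold wN
    have e1 : Sx.smpHom f (S.smpHom (𝟙 R) g) ≫ Sx.smpHom (𝟙 M') (inv (eW hw N'))
        = Sx.smpHom (𝟙 M) (inv (eW hw N)) ≫ Sx.smpHom f (S.smpHom (𝟙 R) g) := by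
      rw [Sx.smpHom_comp', Sx.smpHom_comp', Category.comp_id, Category.id_comp]
      congr 1
      rw [IsIso.comp_inv_eq, Category.assoc, eW_nat hw g, IsIso.inv_hom_id_assoc]
    rw [reassoc_of% e1, Category.assoc, hw.natural f g]
  iso M N := wN_isIso hw M N
  heptagon L M N := by
    haveI := hw.iso
    rw [wN_inv hw (S.smp R M) N, Sx.smpHom_id_comp]
    simp only [Category.assoc]
    have eA : Sx.smpHom (𝟙 L) (Sx.smpHom (𝟙 (S.smp R M)) (eW hw N))
          ≫ Sx.γ L (S.smp R M) (S.smp R N)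
        = Sx.γ L (S.smp R M) (S.smp R N)
          ≫ Sx.smpHom (𝟙 (Sx.smp L (S.smp R M))) (eW hw N) := by
      have := Sx.γ_natural (𝟙 L) (𝟙 (S.smp R M)) (eW hw N)
      rwa [Sx.smpHom_id] at this
    rw [reassoc_of% eA]
    show _ ≫ _ ≫ _ ≫ _ ≫ (Sx.smpHom (𝟙 (Sx.smp L (S.smp R M))) (inv (eW hw N))
        ≫ w (Sx.smp L (S.smp R M)) N) ≫ _ = _
    simp only [Category.assoc]
    rw [reassoc_of% (Sx.smpHom_id_hom_inv (Sx.smp L (S.smp R M)) (eW hw N))]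
    show _ ≫ _ ≫ _ ≫ _ ≫ S.smpHom (Sx.smpHom (𝟙 L) (inv (eW hw M)) ≫ w L M) (𝟙 N) = _
    rw [S.smpHom_comp_id]
    rw [← Category.assoc (w (Sx.smp L (S.smp R M)) N),
      ← hw.nat1 N (Sx.smpHom (𝟙 L) (inv (eW hw M)))]
    simp only [Category.assoc]
    have eB : Sx.γ L (S.smp R M) (S.smp R N)
          ≫ Sx.smpHom (Sx.smpHom (𝟙 L) (inv (eW hw M))) (𝟙 (S.smp R N))
        = Sx.smpHom (𝟙 L) (Sx.smpHom (inv (eW hw M)) (𝟙 (S.smp R N)))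
          ≫ Sx.γ L (S.smp R M) (S.smp R N) :=
      (Sx.γ_natural (𝟙 L) (inv (eW hw M)) (𝟙 (S.smp R N))).symm
    rw [reassoc_of% eB]
    have key : S.γ R M N ≫ inv (w (S.smp R M) N)
          ≫ Sx.smpHom (inv (eW hw M)) (𝟙 (S.smp R N))
        = inv (eW hw (S.smp M N)) ≫ S.γ R M N ≫ inv (w (S.smp R M) N) := by
      rw [← hw.inv_nat1 N (inv (eW hw M)), reassoc_of% (eW_E_inv hw M N)]
    have e5 : Sx.smpHom (𝟙 L) (S.γ R M N)
          ≫ Sx.smpHom (𝟙 L) (inv (w (S.smp R M) N))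
          ≫ Sx.smpHom (𝟙 L) (Sx.smpHom (inv (eW hw M)) (𝟙 (S.smp R N)))
        = Sx.smpHom (𝟙 L) (inv (eW hw (S.smp M N)))
          ≫ Sx.smpHom (𝟙 L) (S.γ R M N)
          ≫ Sx.smpHom (𝟙 L) (inv (w (S.smp R M) N)) := by
      simp only [← Sx.smpHom_id_comp]
      rw [key]
    rw [reassoc_of% e5]
    rw [hw.hepta L M N]
    unfold wN
    simp only [Category.assoc]
  tetragon M := by
    unfold wN
    rw [Category.assoc, hw.tetragon M]
    have einner : inv (eW hw R) ≫ S.ε R = S.ε R := by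
      rw [IsIso.inv_comp_eq, eW_eps hw]
    have e : Sx.smpHom (𝟙 M) (inv (eW hw R)) ≫ Sx.smpHom (𝟙 M) (S.ε R)
        = Sx.smpHom (𝟙 M) (S.ε R) := by
      rw [Sx.smpHom_comp', Category.id_comp, einner]
    rw [reassoc_of% e]

end Norm
end GoodW

namespace GoodW
section Fusion
variable {C : Type u} [Category.{v} C] {R : C}
variable {S Sx : RightMonoidalStruct C R}
variable {w : ∀ M N : C, Sx.smp M (S.smp R N) ⟶ S.smp M N}
variable [∀ L M N : C, IsIso (Sx.γ L M N)] [∀ M : C, IsIso (Sx.η M)]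
  [∀ M : C, IsIso (Sx.ε M)]
set_option linter.unusedSectionVars false

/-- `φ_{M,N} := w ∘ (M ⊗ η_N) : M ⊗ N → M ⋆ N`. -/
def phiW (w : ∀ M N : C, Sx.smp M (S.smp R N) ⟶ S.smp M N) (M N : C) :
    Sx.smp M N ⟶ S.smp M N :=
  Sx.smpHom (𝟙 M) (S.η N) ≫ w M N

/-- The fusion operator `h_{M,N} := w⁻¹ ∘ γ ∘ Tw`. -/
noncomputable def hF (hw : GoodW S Sx w) (M N : C) :
    S.smp R (Sx.smp M (S.smp R N)) ⟶ Sx.smp (S.smp R M) (S.smp R N) :=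
  haveI := hw.iso
  S.smpHom (𝟙 R) (w M N) ≫ S.γ R M N ≫ inv (w (S.smp R M) N)

/-- The induced opmonoidal structure `O²`. -/
noncomputable def O2W (hw : GoodW S Sx w) (M N : C) :
    S.smp R (Sx.smp M N) ⟶ Sx.smp (S.smp R M) (S.smp R N) :=
  S.smpHom (𝟙 R) (Sx.smpHom (𝟙 M) (S.η N)) ≫ hF hw M N

lemma phiW_nat (hw : GoodW S Sx w) {M M' N N' : C} (f : M ⟶ M') (g : N ⟶ N') :
    Sx.smpHom f g ≫ phiW w M' N' = phiW w M N ≫ S.smpHom f g := by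
  unfold phiW
  have e1 : Sx.smpHom f g ≫ Sx.smpHom (𝟙 M') (S.η N')
      = Sx.smpHom (𝟙 M) (S.η N) ≫ Sx.smpHom f (S.smpHom (𝟙 R) g) := by
    rw [Sx.smpHom_comp', Sx.smpHom_comp', Category.comp_id, Category.id_comp,
      S.η_natural g]
  rw [reassoc_of% e1, hw.natural f g, Category.assoc]

lemma O2W_w (hw : GoodW S Sx w) (M N : C) :
    O2W hw M N ≫ w (S.smp R M) N
      = S.smpHom (𝟙 R) (phiW w M N) ≫ S.γ R M N := by
  haveI := hw.iso
  unfold O2W hF phiW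
  simp only [Category.assoc, IsIso.inv_hom_id, Category.comp_id]
  rw [← reassoc_of% (S.smpHom_id_comp R (Sx.smpHom (𝟙 M) (S.η N)) (w M N))]

lemma H2 (hw : GoodW S Sx w) (L M N : C) :
    Sx.smpHom (𝟙 L) (S.η (Sx.smp M (S.smp R N)))
        ≫ Sx.smpHom (𝟙 L) (S.smpHom (𝟙 R) (w M N))
        ≫ w L (S.smp M N) ≫ S.γ L M N
      = Sx.γ L M (S.smp R N) ≫ w (Sx.smp L M) N
        ≫ S.smpHom (phiW w L M) (𝟙 N) := by
  haveI := hw.iso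
  rw [← hw.hepta L M N]
  have inner : S.η (Sx.smp M (S.smp R N)) ≫ S.smpHom (𝟙 R) (w M N)
        ≫ S.γ R M N ≫ inv (w (S.smp R M) N)
      = Sx.smpHom (S.η M) (𝟙 (S.smp R N)) := by
    rw [← reassoc_of% (S.η_natural (w M N)), reassoc_of% (S.unit_triangle M N),
      hw.inv_nat1 N (S.η M), IsIso.hom_inv_id_assoc]
  have e4 : Sx.smpHom (𝟙 L) (S.η (Sx.smp M (S.smp R N)))
        ≫ Sx.smpHom (𝟙 L) (S.smpHom (𝟙 R) (w M N))
        ≫ Sx.smpHom (𝟙 L) (S.γ R M N)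
        ≫ Sx.smpHom (𝟙 L) (inv (w (S.smp R M) N))
      = Sx.smpHom (𝟙 L) (Sx.smpHom (S.η M) (𝟙 (S.smp R N))) := by
    simp only [← Sx.smpHom_id_comp]
    rw [inner]
  rw [reassoc_of% e4]
  have eγ : Sx.smpHom (𝟙 L) (Sx.smpHom (S.η M) (𝟙 (S.smp R N)))
        ≫ Sx.γ L (S.smp R M) (S.smp R N)
      = Sx.γ L M (S.smp R N)
        ≫ Sx.smpHom (Sx.smpHom (𝟙 L) (S.η M)) (𝟙 (S.smp R N)) :=
    Sx.γ_natural (𝟙 L) (S.η M) (𝟙 (S.smp R N))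
  rw [reassoc_of% eγ, reassoc_of% (hw.nat1 N (Sx.smpHom (𝟙 L) (S.η M)))]
  rw [← S.smpHom_comp_id]
  rfl

lemma Phi (hw : GoodW S Sx w) (L M N : C) :
    phiW w L (Sx.smp M N) ≫ S.smpHom (𝟙 L) (phiW w M N) ≫ S.γ L M N
      = Sx.γ L M N ≫ phiW w (Sx.smp L M) N ≫ S.smpHom (phiW w L M) (𝟙 N) := by
  haveI := hw.iso
  have inner2 : S.η (Sx.smp M N) ≫ S.smpHom (𝟙 R) (phiW w M N)
      = Sx.smpHom (𝟙 M) (S.η N) ≫ S.η (Sx.smp M (S.smp R N))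
        ≫ S.smpHom (𝟙 R) (w M N) := by
    rw [← S.η_natural (phiW w M N)]
    show (Sx.smpHom (𝟙 M) (S.η N) ≫ w M N) ≫ S.η (S.smp M N) = _
    rw [Category.assoc, S.η_natural (w M N)]
  show (Sx.smpHom (𝟙 L) (S.η (Sx.smp M N)) ≫ w L (Sx.smp M N))
      ≫ S.smpHom (𝟙 L) (phiW w M N) ≫ S.γ L M N = _
  rw [Category.assoc, ← reassoc_of% (hw.nat2 L (phiW w M N))]
  have e4 : Sx.smpHom (𝟙 L) (S.η (Sx.smp M N))
        ≫ Sx.smpHom (𝟙 L) (S.smpHom (𝟙 R) (phiW w M N))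
      = Sx.smpHom (𝟙 L) (Sx.smpHom (𝟙 M) (S.η N))
        ≫ Sx.smpHom (𝟙 L) (S.η (Sx.smp M (S.smp R N)))
        ≫ Sx.smpHom (𝟙 L) (S.smpHom (𝟙 R) (w M N)) := by
    simp only [← Sx.smpHom_id_comp]
    rw [inner2]
  rw [reassoc_of% e4, H2 hw L M N]
  have eγ2 : Sx.smpHom (𝟙 L) (Sx.smpHom (𝟙 M) (S.η N)) ≫ Sx.γ L M (S.smp R N)
      = Sx.γ L M N ≫ Sx.smpHom (𝟙 (Sx.smp L M)) (S.η N) := by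
    have := Sx.γ_natural (𝟙 L) (𝟙 M) (S.η N)
    rwa [Sx.smpHom_id] at this
  rw [reassoc_of% eγ2]
  show _ = Sx.γ L M N ≫ (Sx.smpHom (𝟙 (Sx.smp L M)) (S.η N) ≫ w (Sx.smp L M) N) ≫ _
  rw [Category.assoc]

/-- `(Hμ)` : multiplication versus `w`, for normalized `w`. -/
lemma Hmu (hw : GoodW S Sx w)
    (hnorm : ∀ N : C, Sx.η (S.smp R N) ≫ w R N = 𝟙 (S.smp R N)) (X N : C) :
    Sx.smpHom (𝟙 X) (S.μ N) ≫ w X N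
      = w X (S.smp R N) ≫ S.γ X R N ≫ S.smpHom (S.ε X) (𝟙 N) := by
  haveI := hw.iso
  rw [← reassoc_of% (hw.hepta X R N)]
  have t1 : S.smpHom (w X R) (𝟙 N) ≫ S.smpHom (S.ε X) (𝟙 N)
      = S.smpHom (Sx.smpHom (𝟙 X) (S.ε R)) (𝟙 N) ≫ S.smpHom (Sx.ε X) (𝟙 N) := by
    rw [S.smpHom_comp', S.smpHom_comp', hw.tetragon X]
  rw [t1, ← reassoc_of% (hw.nat1 N (Sx.smpHom (𝟙 X) (S.ε R))),
    ← hw.nat1 N (Sx.ε X)]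
  have eγ : Sx.γ X (S.smp R R) (S.smp R N)
        ≫ Sx.smpHom (Sx.smpHom (𝟙 X) (S.ε R)) (𝟙 (S.smp R N))
      = Sx.smpHom (𝟙 X) (Sx.smpHom (S.ε R) (𝟙 (S.smp R N)))
        ≫ Sx.γ X R (S.smp R N) :=
    (Sx.γ_natural (𝟙 X) (S.ε R) (𝟙 (S.smp R N))).symm
  rw [reassoc_of% eγ]
  have mt : Sx.γ X R (S.smp R N) ≫ Sx.smpHom (Sx.ε X) (𝟙 (S.smp R N))
      = Sx.smpHom (𝟙 X) (inv (Sx.η (S.smp R N))) := by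
    rw [Sx.smpHom_id_inv, ← cancel_epi (Sx.smpHom (𝟙 X) (Sx.η (S.smp R N))),
      IsIso.hom_inv_id]
    exact Sx.mixed_triangle X (S.smp R N)
  rw [← Category.assoc (Sx.γ X R (S.smp R N)), mt]
  have inner : inv (w (S.smp R R) N) ≫ Sx.smpHom (S.ε R) (𝟙 (S.smp R N))
      = S.smpHom (S.ε R) (𝟙 N) ≫ inv (w R N) := (hw.inv_nat1 N (S.ε R)).symm
  have cancel : inv (w R N) ≫ inv (Sx.η (S.smp R N)) = 𝟙 _ := by
    rw [IsIso.inv_comp_eq, Category.comp_id]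
    exact IsIso.inv_eq_of_hom_inv_id (hnorm N)
  have big : S.γ R R N ≫ inv (w (S.smp R R) N)
        ≫ Sx.smpHom (S.ε R) (𝟙 (S.smp R N)) ≫ inv (Sx.η (S.smp R N))
      = S.μ N := by
    rw [reassoc_of% inner, cancel, Category.comp_id]
    rfl
  have e4 : Sx.smpHom (𝟙 X) (S.γ R R N)
        ≫ Sx.smpHom (𝟙 X) (inv (w (S.smp R R) N))
        ≫ Sx.smpHom (𝟙 X) (Sx.smpHom (S.ε R) (𝟙 (S.smp R N)))
        ≫ Sx.smpHom (𝟙 X) (inv (Sx.η (S.smp R N)))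
      = Sx.smpHom (𝟙 X) (S.μ N) := by
    simp only [← Sx.smpHom_id_comp]
    rw [big]
  rw [reassoc_of% e4]

/-- `(H1)` : fusion operator versus multiplication in the second argument. -/
lemma H1 (hw : GoodW S Sx w)
    (hnorm : ∀ N : C, Sx.η (S.smp R N) ≫ w R N = 𝟙 (S.smp R N)) (M N : C) :
    hF hw M (S.smp R N) ≫ Sx.smpHom (𝟙 (S.smp R M)) (S.μ N)
      = S.smpHom (𝟙 R) (Sx.smpHom (𝟙 M) (S.μ N)) ≫ hF hw M N := by
  haveI := hw.iso
  rw [← cancel_mono (w (S.smp R M) N)]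
  unfold hF
  simp only [Category.assoc, IsIso.inv_hom_id, Category.comp_id]
  rw [Hmu hw hnorm (S.smp R M) N, IsIso.inv_hom_id_assoc]
  have er : S.smpHom (𝟙 R) (Sx.smpHom (𝟙 M) (S.μ N)) ≫ S.smpHom (𝟙 R) (w M N)
      = S.smpHom (𝟙 R) (w M (S.smp R N)) ≫ S.smpHom (𝟙 R) (S.γ M R N)
        ≫ S.smpHom (𝟙 R) (S.smpHom (S.ε M) (𝟙 N)) := by
    simp only [← S.smpHom_id_comp]
    rw [Hmu hw hnorm M N]
  rw [reassoc_of% er]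
  have eγ : S.smpHom (𝟙 R) (S.smpHom (S.ε M) (𝟙 N)) ≫ S.γ R M N
      = S.γ R (S.smp M R) N
        ≫ S.smpHom (S.smpHom (𝟙 R) (S.ε M)) (𝟙 N) :=
    S.γ_natural (𝟙 R) (S.ε M) (𝟙 N)
  rw [eγ]
  rw [← reassoc_of% (S.pentagon R M R N)]
  have ec : S.smpHom (S.γ R M R) (𝟙 N) ≫ S.smpHom (S.ε (S.smp R M)) (𝟙 N)
      = S.smpHom (S.smpHom (𝟙 R) (S.ε M)) (𝟙 N) := by
    rw [S.smpHom_comp', S.counit_triangle R M, Category.comp_id]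
  rw [ec]

/-- `(H6)` : fusion operator versus multiplication in the first argument. -/
lemma H6 (hw : GoodW S Sx w) (M N : C) :
    S.smpHom (𝟙 R) (hF hw M N) ≫ hF hw (S.smp R M) N
        ≫ Sx.smpHom (S.μ M) (𝟙 (S.smp R N))
      = S.μ (Sx.smp M (S.smp R N)) ≫ hF hw M N := by
  haveI := hw.iso
  rw [← cancel_mono (w (S.smp R M) N)]
  unfold hF
  simp only [Category.assoc, IsIso.inv_hom_id, Category.comp_id]
  rw [hw.nat1 N (S.μ M), IsIso.inv_hom_id_assoc]
  have em : S.smpHom (𝟙 R) (S.smpHom (𝟙 R) (w M N) ≫ S.γ R M N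
        ≫ inv (w (S.smp R M) N)) ≫ S.smpHom (𝟙 R) (w (S.smp R M) N)
      = S.smpHom (𝟙 R) (S.smpHom (𝟙 R) (w M N)) ≫ S.smpHom (𝟙 R) (S.γ R M N) := by
    simp only [← S.smpHom_id_comp, Category.assoc, IsIso.inv_hom_id, Category.comp_id]
  rw [reassoc_of% em]
  show _ = S.μ (Sx.smp M (S.smp R N)) ≫ S.smpHom (𝟙 R) (w M N) ≫ S.γ R M N
  rw [← reassoc_of% (S.μ_natural (w M N))]
  show _ = S.smpHom (𝟙 R) (S.smpHom (𝟙 R) (w M N)) ≫ (S.γ R R (S.smp M N)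
      ≫ S.smpHom (S.ε R) (𝟙 (S.smp M N))) ≫ S.γ R M N
  have eγ : S.smpHom (S.ε R) (𝟙 (S.smp M N)) ≫ S.γ R M N
      = S.γ (S.smp R R) M N ≫ S.smpHom (S.smpHom (S.ε R) (𝟙 M)) (𝟙 N) := by
    have := S.γ_natural (S.ε R) (𝟙 M) (𝟙 N)
    rwa [S.smpHom_id] at this
  simp only [Category.assoc]
  rw [eγ, ← reassoc_of% (S.pentagon R R M N)]
  show _ ≫ _ ≫ _ ≫ S.smpHom (S.μ M) (𝟙 N) = _
  have ems : S.smpHom (S.μ M) (𝟙 N)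
      = S.smpHom (S.γ R R M) (𝟙 N) ≫ S.smpHom (S.smpHom (S.ε R) (𝟙 M)) (𝟙 N) := by
    rw [S.smpHom_comp']
    simp [RightMonoidalStruct.μ]
  rw [ems]

end Fusion
end GoodW

namespace GoodW
section Build
variable {C : Type u} [Category.{v} C] {R : C}
variable {S Sx : RightMonoidalStruct C R}
variable {w : ∀ M N : C, Sx.smp M (S.smp R N) ⟶ S.smp M N}
variable [∀ L M N : C, IsIso (Sx.γ L M N)] [∀ M : C, IsIso (Sx.η M)]
  [∀ M : C, IsIso (Sx.ε M)]
set_option linter.unusedSectionVars false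

lemma O2W_eq (hw : GoodW S Sx w) (M N : C) :
    O2W hw M N
      = haveI := hw.iso
        S.smpHom (𝟙 R) (phiW w M N) ≫ S.γ R M N ≫ inv (w (S.smp R M) N) := by
  haveI := hw.iso
  unfold O2W hF phiW
  rw [S.smpHom_id_comp]
  simp only [Category.assoc]

lemma O2W_hF (hw : GoodW S Sx w)
    (hnorm : ∀ N : C, Sx.η (S.smp R N) ≫ w R N = 𝟙 (S.smp R N)) (M N : C) :
    O2W hw M (S.smp R N) ≫ Sx.smpHom (𝟙 (S.smp R M)) (S.μ N) = hF hw M N := by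
  unfold O2W
  rw [Category.assoc, H1 hw hnorm M N]
  have e : S.smpHom (𝟙 R) (Sx.smpHom (𝟙 M) (S.η (S.smp R N)))
        ≫ S.smpHom (𝟙 R) (Sx.smpHom (𝟙 M) (S.μ N)) = 𝟙 _ := by
    rw [S.smpHom_comp', Category.id_comp, Sx.smpHom_comp', Category.id_comp,
      S.μ_unit_left, Sx.smpHom_id, S.smpHom_id]
  rw [reassoc_of% e]

lemma isOpmonoidal_of_goodW (hw : GoodW S Sx w)
    (hnorm : ∀ N : C, Sx.η (S.smp R N) ≫ w R N = 𝟙 (S.smp R N)) :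
    IsOpmonoidal Sx (S.TS) (O2W hw) (S.ε R) := by
  haveI := hw.iso
  refine ⟨?_, ?_, ?_, ?_, ?_, ?_, ?_, S.unit_counit⟩
  · -- naturality
    intro M M' N N' f g
    show S.smpHom (𝟙 R) (Sx.smpHom f g) ≫ O2W hw M' N'
      = O2W hw M N ≫ Sx.smpHom (S.smpHom (𝟙 R) f) (S.smpHom (𝟙 R) g)
    rw [← cancel_mono (w (S.smp R M') N')]
    simp only [Category.assoc]
    rw [hw.natural (S.smpHom (𝟙 R) f) g, reassoc_of% (O2W_w hw M N),
      O2W_w hw M' N']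
    have e1 : S.smpHom (𝟙 R) (Sx.smpHom f g) ≫ S.smpHom (𝟙 R) (phiW w M' N')
        = S.smpHom (𝟙 R) (phiW w M N) ≫ S.smpHom (𝟙 R) (S.smpHom f g) := by
      rw [S.smpHom_comp', S.smpHom_comp', Category.id_comp, phiW_nat hw f g]
    rw [reassoc_of% e1, S.γ_natural (𝟙 R) f g]
  · -- opmonoidal pentagon
    intro L M N
    show O2W hw L (Sx.smp M N)
        ≫ Sx.smpHom (𝟙 (S.smp R L)) (O2W hw M N)
        ≫ Sx.γ (S.smp R L) (S.smp R M) (S.smp R N)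
      = S.smpHom (𝟙 R) (Sx.γ L M N) ≫ O2W hw (Sx.smp L M) N
        ≫ Sx.smpHom (O2W hw L M) (𝟙 (S.smp R N))
    rw [← cancel_mono (w (Sx.smp (S.smp R L) (S.smp R M)) N
      ≫ S.smpHom (w (S.smp R L) M) (𝟙 N))]
    simp only [Category.assoc]
    rw [O2W_eq hw M N, Sx.smpHom_id_comp, Sx.smpHom_id_comp]
    simp only [Category.assoc]
    rw [hw.hepta (S.smp R L) M N]
    rw [reassoc_of% (hw.nat2 (S.smp R L) (phiW w M N))]
    rw [reassoc_of% (O2W_w hw L (Sx.smp M N))]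
    have eγ1 : S.γ R L (Sx.smp M N) ≫ S.smpHom (𝟙 (S.smp R L)) (phiW w M N)
        = S.smpHom (𝟙 R) (S.smpHom (𝟙 L) (phiW w M N)) ≫ S.γ R L (S.smp M N) := by
      have := S.γ_natural (𝟙 R) (𝟙 L) (phiW w M N)
      rw [S.smpHom_id] at this
      exact this.symm
    rw [reassoc_of% eγ1, ← S.pentagon R L M N]
    have ePhi : S.smpHom (𝟙 R) (phiW w L (Sx.smp M N))
          ≫ S.smpHom (𝟙 R) (S.smpHom (𝟙 L) (phiW w M N))
          ≫ S.smpHom (𝟙 R) (S.γ L M N)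
        = S.smpHom (𝟙 R) (Sx.γ L M N)
          ≫ S.smpHom (𝟙 R) (phiW w (Sx.smp L M) N)
          ≫ S.smpHom (𝟙 R) (S.smpHom (phiW w L M) (𝟙 N)) := by
      simp only [← S.smpHom_id_comp]
      rw [Phi hw L M N]
    rw [reassoc_of% ePhi]
    -- right-hand side
    rw [reassoc_of% (hw.nat1 N (O2W hw L M))]
    rw [reassoc_of% (O2W_w hw (Sx.smp L M) N)]
    have em : S.smpHom (O2W hw L M) (𝟙 N) ≫ S.smpHom (w (S.smp R L) M) (𝟙 N)
        = S.smpHom (S.smpHom (𝟙 R) (phiW w L M) ≫ S.γ R L M) (𝟙 N) := by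
      rw [S.smpHom_comp', Category.comp_id, O2W_w hw L M]
    rw [em, S.smpHom_comp_id]
    have eγ2 : S.γ R (Sx.smp L M) N
          ≫ S.smpHom (S.smpHom (𝟙 R) (phiW w L M)) (𝟙 N)
        = S.smpHom (𝟙 R) (S.smpHom (phiW w L M) (𝟙 N)) ≫ S.γ R (S.smp L M) N :=
      (S.γ_natural (𝟙 R) (phiW w L M) (𝟙 N)).symm
    rw [reassoc_of% eγ2]
  · -- unit compatibility
    intro N
    show S.smpHom (𝟙 R) (Sx.η N) ≫ O2W hw R N
        ≫ Sx.smpHom (S.ε R) (𝟙 (S.smp R N)) = Sx.η (S.smp R N)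
    rw [← cancel_mono (w R N), Category.assoc, Category.assoc,
      hw.nat1 N (S.ε R), reassoc_of% (O2W_w hw R N), hnorm N]
    have inner : Sx.η N ≫ phiW w R N = S.η N := by
      unfold phiW
      rw [← reassoc_of% (Sx.η_natural (S.η N)), hnorm N, Category.comp_id]
    have e1 : S.smpHom (𝟙 R) (Sx.η N) ≫ S.smpHom (𝟙 R) (phiW w R N)
        = S.smpHom (𝟙 R) (S.η N) := by
      rw [S.smpHom_comp', Category.id_comp, inner]
    rw [reassoc_of% e1]
    show S.smpHom (𝟙 R) (S.η N) ≫ S.μ N = 𝟙 _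
    exact S.μ_unit_right N
  · -- counit compatibility
    intro M
    show O2W hw M R ≫ Sx.smpHom (𝟙 (S.smp R M)) (S.ε R) ≫ Sx.ε (S.smp R M)
      = S.smpHom (𝟙 R) (Sx.ε M)
    rw [← hw.tetragon (S.smp R M), O2W_eq hw M R, Category.assoc,
      Category.assoc, IsIso.inv_hom_id_assoc]
    rw [S.counit_triangle R M]
    have inner : phiW w M R ≫ S.ε M = Sx.ε M := by
      unfold phiW
      rw [Category.assoc, hw.tetragon M, ← reassoc_of% (Sx.smpHom_id_comp M (S.η R) (S.ε R)),
        S.unit_counit, Sx.smpHom_id, Category.id_comp]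
    rw [S.smpHom_comp', Category.id_comp, inner]
  · -- multiplicativity
    intro M N
    show S.smpHom (𝟙 R) (O2W hw M N)
        ≫ O2W hw (S.smp R M) (S.smp R N) ≫ Sx.smpHom (S.μ M) (S.μ N)
      = S.μ (Sx.smp M N) ≫ O2W hw M N
    have esplit : Sx.smpHom (S.μ M) (S.μ N)
        = Sx.smpHom (𝟙 (S.smp R (S.smp R M))) (S.μ N)
          ≫ Sx.smpHom (S.μ M) (𝟙 (S.smp R N)) := by
      rw [Sx.smpHom_comp']
      simp
    rw [esplit]
    rw [← Category.assoc (O2W hw (S.smp R M) (S.smp R N)),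
      O2W_hF hw hnorm (S.smp R M) N]
    unfold O2W
    rw [S.smpHom_id_comp R (S.smpHom (𝟙 R) (Sx.smpHom (𝟙 M) (S.η N))) (hF hw M N)]
    simp only [Category.assoc]
    rw [H6 hw M N, ← reassoc_of% (S.μ_natural (Sx.smpHom (𝟙 M) (S.η N)))]
  · -- compatibility of `μ` and `O⁰`
    show S.μ R ≫ S.ε R = S.smpHom (𝟙 R) (S.ε R) ≫ S.ε R
    show (S.γ R R R ≫ S.smpHom (S.ε R) (𝟙 R)) ≫ S.ε R = _
    rw [Category.assoc, S.ε_natural (S.ε R), ← Category.assoc,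
      ← S.counit_triangle R R]
  · -- unitality
    intro M N
    show S.η (Sx.smp M N) ≫ O2W hw M N = Sx.smpHom (S.η M) (S.η N)
    rw [← cancel_mono (w (S.smp R M) N), Category.assoc, O2W_w hw M N,
      ← reassoc_of% (S.η_natural (phiW w M N)), S.unit_triangle M N]
    have edec : Sx.smpHom (S.η M) (S.η N) ≫ w (S.smp R M) N
        = Sx.smpHom (S.η M) (𝟙 N) ≫ phiW w (S.smp R M) N := by
      unfold phiW
      rw [← Category.assoc, Sx.smpHom_comp', Category.id_comp, Category.comp_id]
    rw [edec, phiW_nat hw (S.η M) (𝟙 N)]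

end Build
end GoodW

namespace GoodW
section Build2
variable {C : Type u} [Category.{v} C] {R : C}
variable {S Sx : RightMonoidalStruct C R}
variable {w : ∀ M N : C, Sx.smp M (S.smp R N) ⟶ S.smp M N}
variable [∀ L M N : C, IsIso (Sx.γ L M N)] [∀ M : C, IsIso (Sx.η M)]
  [∀ M : C, IsIso (Sx.ε M)]
set_option linter.unusedSectionVars false

lemma twist_of_goodW (hw : GoodW S Sx w)
    (hnorm : ∀ N : C, Sx.η (S.smp R N) ≫ w R N = 𝟙 (S.smp R N)) :
    TwistFromBimonad S Sx (S.TS) (O2W hw) (S.ε R) w where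
  natural f g := hw.natural f g
  iso := hw.iso
  hexagon L M N := by
    haveI := hw.iso
    unfold gdot
    show (Sx.smpHom (𝟙 L) (O2W hw M (S.smp R N))
        ≫ Sx.smpHom (𝟙 L) (Sx.smpHom (𝟙 (S.smp R M)) (S.μ N))
        ≫ Sx.γ L (S.smp R M) (S.smp R N))
        ≫ Sx.smpHom (w L M) (𝟙 (S.smp R N)) ≫ w (S.smp L M) N
      = Sx.smpHom (𝟙 L) (S.smpHom (𝟙 R) (w M N)) ≫ w L (S.smp M N) ≫ S.γ L M N
    have e1 : Sx.smpHom (𝟙 L) (O2W hw M (S.smp R N))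
        ≫ Sx.smpHom (𝟙 L) (Sx.smpHom (𝟙 (S.smp R M)) (S.μ N))
        = Sx.smpHom (𝟙 L) (hF hw M N) := by
      rw [← Sx.smpHom_id_comp, O2W_hF hw hnorm M N]
    simp only [Category.assoc]
    rw [reassoc_of% e1]
    have e2 : Sx.smpHom (𝟙 L) (hF hw M N)
        = Sx.smpHom (𝟙 L) (S.smpHom (𝟙 R) (w M N))
          ≫ Sx.smpHom (𝟙 L) (S.γ R M N)
          ≫ Sx.smpHom (𝟙 L) (inv (w (S.smp R M) N)) := by
      unfold hF
      rw [Sx.smpHom_id_comp, Sx.smpHom_id_comp]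
    rw [e2]
    simp only [Category.assoc]
    rw [hw.nat1 N (w L M), hw.hepta L M N]
  unit N := by
    show (S.η N ≫ Sx.η (S.smp R N)) ≫ w R N = S.η N
    rw [Category.assoc, hnorm N, Category.comp_id]
  counit M := hw.tetragon M

end Build2
end GoodW
/-- Theorem 8.8 of Szlachányi; the Representability Theorem.
Let `⟨𝓔, ⊗, R, α, ℓ⁻¹, r⟩` be a monoidal category and `⋆` a right-monoidal
structure on `𝓔` with the same unit `R`, with canonical monad `T = R ⋆ -`.
The following are equivalent:
(i) the `⋆`-structure is `⊗`-representable: there are a `⊗`-bimonad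
    `⟨O, ω, ι, O², O⁰⟩` and a twist isomorphism from the `⋆`-structure to the
    right-monoidal structure `M ⊙ N := M ⊗ ON` it induces;
(ii) there is a natural isomorphism `w_{M,N} : M ⊗ TN → M ⋆ N` satisfying the
    heptagon and the tetragon equations;
(iii) there is a tetrahedral isomorphism `t_{L,M,N} : L⊗(M⋆N) → (L⊗M)⋆N`. -/
theorem representability (S Sx : RightMonoidalStruct C R)
    [∀ L M N : C, IsIso (Sx.γ L M N)]
    [∀ M : C, IsIso (Sx.η M)]
    [∀ M : C, IsIso (Sx.ε M)] :
    ((∃ (O : MonadStr C)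
        (O2 : ∀ M N : C, O.obj (Sx.smp M N) ⟶ Sx.smp (O.obj M) (O.obj N))
        (O0 : O.obj R ⟶ R)
        (v : ∀ M N : C, Sx.smp M (O.obj N) ⟶ S.smp M N),
        IsOpmonoidal Sx O O2 O0 ∧ TwistFromBimonad S Sx O O2 O0 v)
      ↔ (∃ w : ∀ M N : C, Sx.smp M (S.smp R N) ⟶ S.smp M N, GoodW S Sx w)) ∧
    ((∃ w : ∀ M N : C, Sx.smp M (S.smp R N) ⟶ S.smp M N, GoodW S Sx w)
      ↔ (∃ t : ∀ L M N : C, Sx.smp L (S.smp M N) ⟶ S.smp (Sx.smp L M) N,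
          TetraHom S Sx t ∧ ∀ M N : C, IsIso (twOf S Sx t M N))) := by
  constructor
  · constructor
    · rintro ⟨O, O2, O0, v, _, htw⟩
      exact ⟨wvOf htw, goodW_wvOf htw⟩
    · rintro ⟨w, hw⟩
      exact ⟨S.TS, GoodW.O2W (GoodW.goodW_wN hw), S.ε R, GoodW.wN hw,
        GoodW.isOpmonoidal_of_goodW (GoodW.goodW_wN hw) (GoodW.wN_norm hw),
        GoodW.twist_of_goodW (GoodW.goodW_wN hw) (GoodW.wN_norm hw)⟩
  · constructor
    · rintro ⟨w, hw⟩
      exact ⟨GoodW.tOf hw, ⟨fun f g h => GoodW.tOf_natural hw f g h,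
        GoodW.tOf_pentagon1 hw, GoodW.tOf_pentagon2 hw,
        GoodW.tOf_unit hw, GoodW.tOf_counit hw⟩,
        GoodW.twOf_tOf_isIso hw⟩
    · rintro ⟨t, ht, hiso⟩
      exact ⟨twOf S Sx t, goodW_twOf ht hiso⟩
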